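/- Let H_0 ∈ ℝ^{N×T×F} be a third-order tensor and suppose B1 ∈ ℝ^{N×N}, B2 ∈ ℝ^{T×T}, B3 ∈ ℝ^{F×F} admit diagonalizations B1 = P1 Λ1 P1⁻¹, B2 = P2 Λ2 P2⁻¹, B3 = P3 Λ3 P3⁻¹ with Λ1 = diag(λ_1,…,λ_N), Λ2 = diag(μ_1,…,μ_T), Λ3 = diag(ν_1,…,ν_F), and assume λ_i + μ_j + ν_k ≠ 0 for all indices. Set H̃_0 = H_0 ×_1 ((P1⁻¹)ᵀ) ×_2 ((P2⁻¹)ᵀ) ×_3 ((P3⁻¹)ᵀ) (so that mode-multiplying H̃_0 back by P1ᵀ, P2ᵀ, P3ᵀ recovers H_0). Then ∫_0^t H_0 ×_1 exp((t−τ)B1ᵀ) ×_2 exp((t−τ)B2ᵀ) ×_3 exp((t−τ)B3ᵀ) dτ equals the tensor whose (i,j,k)-transformed entries are (H̃_0)_{ijk}(e^{(λ_i+μ_j+ν_k)t} − 1)/(λ_i+μ_j+ν_k), mode-multiplied by P1ᵀ, P2ᵀ, P3ᵀ on modes 1, 2, 3 respectively. -/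

import Mathlib

open scoped BigOperators
open Matrix intervalIntegral

noncomputable section

/-- Mode-1 product of a third-order tensor with a matrix. -/
def tmul1 {n1 n2 n3 m : ℕ} (T : Fin n1 → Fin n2 → Fin n3 → ℝ)
    (M : Matrix (Fin n1) (Fin m) ℝ) : Fin m → Fin n2 → Fin n3 → ℝ :=
  fun l j k => ∑ i, T i j k * M i l

/-- Mode-2 product of a third-order tensor with a matrix. -/
def tmul2 {n1 n2 n3 m : ℕ} (T : Fin n1 → Fin n2 → Fin n3 → ℝ)
    (M : Matrix (Fin n2) (Fin m) ℝ) : Fin n1 → Fin m → Fin n3 → ℝ :=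
  fun i l k => ∑ j, T i j k * M j l

/-- Mode-3 product of a third-order tensor with a matrix. -/
def tmul3 {n1 n2 n3 m : ℕ} (T : Fin n1 → Fin n2 → Fin n3 → ℝ)
    (M : Matrix (Fin n3) (Fin m) ℝ) : Fin n1 → Fin n2 → Fin m → ℝ :=
  fun i j l => ∑ k, T i j k * M k l

/-! Since `B = P Λ Q` with `P Q = 1`, we have `exp (s Bᵀ) = Qᵀ exp (s Λ) Pᵀ`, so the three
mode products factor through the eigenbases: the integrand is `H̃₀` scaled entrywise by
`e^{(λ_i + μ_j + ν_k)(t - τ)}` and then mode-multiplied by `P₁ᵀ, P₂ᵀ, P₃ᵀ`. Mode products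
are linear, so the integral passes through them and reduces entrywise to
`∫₀ᵗ e^{c (t - τ)} dτ = (e^{c t} - 1) / c`. -/

section ModeProduct

variable {n1 n2 n3 m1 m2 m3 p1 p2 p3 : ℕ}

lemma tmul1_tmul1 (X : Fin n1 → Fin n2 → Fin n3 → ℝ)
    (A : Matrix (Fin n1) (Fin m1) ℝ) (A' : Matrix (Fin m1) (Fin p1) ℝ) :
    tmul1 (tmul1 X A) A' = tmul1 X (A * A') := by
  funext l j k
  simp only [tmul1, Matrix.mul_apply, Finset.mul_sum, Finset.sum_mul]
  rw [Finset.sum_comm]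
  simp only [mul_assoc]

lemma tmul2_tmul2 (X : Fin n1 → Fin n2 → Fin n3 → ℝ)
    (B : Matrix (Fin n2) (Fin m2) ℝ) (B' : Matrix (Fin m2) (Fin p2) ℝ) :
    tmul2 (tmul2 X B) B' = tmul2 X (B * B') := by
  funext i l k
  simp only [tmul2, Matrix.mul_apply, Finset.mul_sum, Finset.sum_mul]
  rw [Finset.sum_comm]
  simp only [mul_assoc]

lemma tmul3_tmul3 (X : Fin n1 → Fin n2 → Fin n3 → ℝ)
    (C : Matrix (Fin n3) (Fin m3) ℝ) (C' : Matrix (Fin m3) (Fin p3) ℝ) :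
    tmul3 (tmul3 X C) C' = tmul3 X (C * C') := by
  funext i j l
  simp only [tmul3, Matrix.mul_apply, Finset.mul_sum, Finset.sum_mul]
  rw [Finset.sum_comm]
  simp only [mul_assoc]

lemma tmul2_tmul1_comm (X : Fin n1 → Fin n2 → Fin n3 → ℝ)
    (A : Matrix (Fin n1) (Fin m1) ℝ) (B : Matrix (Fin n2) (Fin m2) ℝ) :
    tmul2 (tmul1 X A) B = tmul1 (tmul2 X B) A := by
  funext l m k
  simp only [tmul1, tmul2, Finset.sum_mul]
  rw [Finset.sum_comm]
  simp only [mul_right_comm]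

lemma tmul3_tmul1_comm (X : Fin n1 → Fin n2 → Fin n3 → ℝ)
    (A : Matrix (Fin n1) (Fin m1) ℝ) (C : Matrix (Fin n3) (Fin m3) ℝ) :
    tmul3 (tmul1 X A) C = tmul1 (tmul3 X C) A := by
  funext l j m
  simp only [tmul1, tmul3, Finset.sum_mul]
  rw [Finset.sum_comm]
  simp only [mul_right_comm]

lemma tmul3_tmul2_comm (X : Fin n1 → Fin n2 → Fin n3 → ℝ)
    (B : Matrix (Fin n2) (Fin m2) ℝ) (C : Matrix (Fin n3) (Fin m3) ℝ) :
    tmul3 (tmul2 X B) C = tmul2 (tmul3 X C) B := by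
  funext i l m
  simp only [tmul2, tmul3, Finset.sum_mul]
  rw [Finset.sum_comm]
  simp only [mul_right_comm]

/-- The Tucker product `X ×₁ A ×₂ B ×₃ C`. -/
def tucker (X : Fin n1 → Fin n2 → Fin n3 → ℝ) (A : Matrix (Fin n1) (Fin m1) ℝ)
    (B : Matrix (Fin n2) (Fin m2) ℝ) (C : Matrix (Fin n3) (Fin m3) ℝ) :
    Fin m1 → Fin m2 → Fin m3 → ℝ :=
  tmul3 (tmul2 (tmul1 X A) B) C

lemma tucker_apply (X : Fin n1 → Fin n2 → Fin n3 → ℝ) (A : Matrix (Fin n1) (Fin m1) ℝ)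
    (B : Matrix (Fin n2) (Fin m2) ℝ) (C : Matrix (Fin n3) (Fin m3) ℝ)
    (l : Fin m1) (m : Fin m2) (n : Fin m3) :
    tucker X A B C l m n = ∑ k, ∑ j, ∑ i, X i j k * A i l * B j m * C k n := by
  simp only [tucker, tmul1, tmul2, tmul3, Finset.sum_mul]

lemma tucker_mul (X : Fin n1 → Fin n2 → Fin n3 → ℝ)
    (A : Matrix (Fin n1) (Fin m1) ℝ) (A' : Matrix (Fin m1) (Fin p1) ℝ)
    (B : Matrix (Fin n2) (Fin m2) ℝ) (B' : Matrix (Fin m2) (Fin p2) ℝ)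
    (C : Matrix (Fin n3) (Fin m3) ℝ) (C' : Matrix (Fin m3) (Fin p3) ℝ) :
    tucker X (A * A') (B * B') (C * C') = tucker (tucker X A B C) A' B' C' := by
  simp only [tucker]
  rw [← tmul1_tmul1, ← tmul2_tmul2, ← tmul3_tmul3, tmul2_tmul1_comm, tmul3_tmul2_comm,
    tmul3_tmul1_comm]

lemma tucker_diagonal (X : Fin n1 → Fin n2 → Fin n3 → ℝ)
    (u : Fin n1 → ℝ) (v : Fin n2 → ℝ) (w : Fin n3 → ℝ) :
    tucker X (diagonal u) (diagonal v) (diagonal w) = fun i j k => X i j k * (u i * v j * w k) := by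
  funext i j k
  simp [tucker_apply, diagonal_apply, mul_assoc]

lemma integral_tucker {a b : ℝ} (X : ℝ → Fin n1 → Fin n2 → Fin n3 → ℝ)
    (hX : ∀ i j k, IntervalIntegrable (fun τ => X τ i j k) MeasureTheory.volume a b)
    (A : Matrix (Fin n1) (Fin m1) ℝ) (B : Matrix (Fin n2) (Fin m2) ℝ)
    (C : Matrix (Fin n3) (Fin m3) ℝ) :
    (fun l m n => ∫ τ in a..b, tucker (X τ) A B C l m n) =
      tucker (fun i j k => ∫ τ in a..b, X τ i j k) A B C := by
  funext l m n
  simp only [tucker_apply]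
  have hint : ∀ i j k, IntervalIntegrable
      (fun τ => X τ i j k * A i l * B j m * C k n) MeasureTheory.volume a b :=
    fun i j k => (((hX i j k).mul_const _).mul_const _).mul_const _
  have hint₁ : ∀ j k, IntervalIntegrable
      (fun τ => ∑ i, X τ i j k * A i l * B j m * C k n) MeasureTheory.volume a b :=
    fun j k => by simpa only [Finset.sum_fn] using IntervalIntegrable.sum _ fun i _ => hint i j k
  have hint₂ : ∀ k, IntervalIntegrable
      (fun τ => ∑ j, ∑ i, X τ i j k * A i l * B j m * C k n) MeasureTheory.volume a b :=
    fun k => by simpa only [Finset.sum_fn] using IntervalIntegrable.sum _ fun j _ => hint₁ j k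
  rw [integral_finsetSum fun k _ => hint₂ k]
  refine Finset.sum_congr rfl fun k _ => ?_
  rw [integral_finsetSum fun j _ => hint₁ j k]
  refine Finset.sum_congr rfl fun j _ => ?_
  rw [integral_finsetSum fun i _ => hint i j k]
  simp only [integral_mul_const]

end ModeProduct

lemma exp_smul_conj_diagonal {n : Type*} [Fintype n] [DecidableEq n]
    (P Q : Matrix n n ℝ) (hPQ : P * Q = 1) (d : n → ℝ) (s : ℝ) :
    NormedSpace.exp (s • (P * diagonal d * Q)) =
      P * diagonal (fun a => Real.exp (s * d a)) * Q := by
  obtain rfl : Q = P⁻¹ := (inv_eq_right_inv hPQ).symm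
  rw [← Matrix.smul_mul, ← Matrix.mul_smul, ← diagonal_smul,
    exp_conj _ _ (IsUnit.of_mul_eq_one _ hPQ), exp_diagonal, Pi.exp_def, ← Real.exp_eq_exp_ℝ]
  rfl

lemma exp_smul_transpose_eq {n : Type*} [Fintype n] [DecidableEq n]
    {B P Q : Matrix n n ℝ} {d : n → ℝ} (hPQ : P * Q = 1) (hB : B = P * diagonal d * Q)
    (s : ℝ) :
    NormedSpace.exp (s • Bᵀ) = Qᵀ * diagonal (fun a => Real.exp (s * d a)) * Pᵀ := by
  have hQP : Qᵀ * Pᵀ = 1 := by rw [← transpose_mul, hPQ, transpose_one]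
  rw [hB, transpose_mul, transpose_mul, diagonal_transpose, ← Matrix.mul_assoc,
    exp_smul_conj_diagonal _ _ hQP]

lemma integral_exp_mul_sub (c t : ℝ) (hc : c ≠ 0) :
    ∫ τ in (0 : ℝ)..t, Real.exp (c * (t - τ)) = (Real.exp (c * t) - 1) / c := by
  rw [integral_comp_sub_left (fun τ => Real.exp (c * τ)), sub_self, sub_zero,
    integral_comp_mul_left Real.exp hc, integral_exp, mul_zero, Real.exp_zero,
    smul_eq_mul, inv_mul_eq_div]

theorem integral_term_closed_form_general {N T F : ℕ}
    (H0 : Fin N → Fin T → Fin F → ℝ)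
    (B1 P1 Q1 : Matrix (Fin N) (Fin N) ℝ) (lam : Fin N → ℝ)
    (B2 P2 Q2 : Matrix (Fin T) (Fin T) ℝ) (mu : Fin T → ℝ)
    (B3 P3 Q3 : Matrix (Fin F) (Fin F) ℝ) (nu : Fin F → ℝ)
    (hP1 : P1 * Q1 = 1)
    (hP2 : P2 * Q2 = 1)
    (hP3 : P3 * Q3 = 1)
    (hB1 : B1 = P1 * Matrix.diagonal lam * Q1)
    (hB2 : B2 = P2 * Matrix.diagonal mu * Q2)
    (hB3 : B3 = P3 * Matrix.diagonal nu * Q3)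
    (hne : ∀ (i : Fin N) (j : Fin T) (k : Fin F), lam i + mu j + nu k ≠ 0)
    (H0t : Fin N → Fin T → Fin F → ℝ)
    (hH0t : H0t = tmul3 (tmul2 (tmul1 H0 Q1ᵀ) Q2ᵀ) Q3ᵀ)
    (t : ℝ) :
    (fun i j k => ∫ τ in (0:ℝ)..t,
        tmul3 (tmul2 (tmul1 H0 (NormedSpace.exp ((t - τ) • B1ᵀ)))
          (NormedSpace.exp ((t - τ) • B2ᵀ)))
          (NormedSpace.exp ((t - τ) • B3ᵀ)) i j k) =
      tmul3 (tmul2 (tmul1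
        (fun i j k => H0t i j k * (Real.exp ((lam i + mu j + nu k) * t) - 1) /
          (lam i + mu j + nu k)) P1ᵀ) P2ᵀ) P3ᵀ := by
  have hH0t' : tucker H0 Q1ᵀ Q2ᵀ Q3ᵀ = H0t := hH0t.symm
  have integrand (τ : ℝ) :
      tucker H0 (NormedSpace.exp ((t - τ) • B1ᵀ)) (NormedSpace.exp ((t - τ) • B2ᵀ))
        (NormedSpace.exp ((t - τ) • B3ᵀ)) =
      tucker (fun a b c => H0t a b c * Real.exp ((lam a + mu b + nu c) * (t - τ)))
        P1ᵀ P2ᵀ P3ᵀ := by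
    rw [exp_smul_transpose_eq hP1 hB1, exp_smul_transpose_eq hP2 hB2,
      exp_smul_transpose_eq hP3 hB3, tucker_mul, tucker_mul, hH0t', tucker_diagonal]
    simp only [add_mul, Real.exp_add, mul_comm (t - τ)]
  change (fun i j k => ∫ τ in (0:ℝ)..t, tucker H0 _ _ _ i j k) = tucker _ P1ᵀ P2ᵀ P3ᵀ
  simp_rw [integrand]
  rw [integral_tucker _ fun a b c => (by fun_prop : Continuous _).intervalIntegrable 0 t]
  congr
  funext a b c
  rw [integral_const_mul, integral_exp_mul_sub _ _ (hne a b c), mul_div_assoc]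

/-- Closed-form evaluation of the integral term of the analytic ODE solution for
diagonalizable matrices `B₁ = P₁Λ₁P₁⁻¹`, `B₂ = P₂Λ₂P₂⁻¹`, `B₃ = P₃Λ₃P₃⁻¹` with
`λ_i + μ_j + ν_k ≠ 0` for all indices. -/
theorem integral_term_closed_form {N T F : ℕ}
    (H0 : Fin N → Fin T → Fin F → ℝ)
    (B1 P1 Q1 : Matrix (Fin N) (Fin N) ℝ) (lam : Fin N → ℝ)
    (B2 P2 Q2 : Matrix (Fin T) (Fin T) ℝ) (mu : Fin T → ℝ)
    (B3 P3 Q3 : Matrix (Fin F) (Fin F) ℝ) (nu : Fin F → ℝ)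
    (hP1 : P1 * Q1 = 1) (hQ1 : Q1 * P1 = 1)
    (hP2 : P2 * Q2 = 1) (hQ2 : Q2 * P2 = 1)
    (hP3 : P3 * Q3 = 1) (hQ3 : Q3 * P3 = 1)
    (hB1 : B1 = P1 * Matrix.diagonal lam * Q1)
    (hB2 : B2 = P2 * Matrix.diagonal mu * Q2)
    (hB3 : B3 = P3 * Matrix.diagonal nu * Q3)
    (hne : ∀ (i : Fin N) (j : Fin T) (k : Fin F), lam i + mu j + nu k ≠ 0)
    (H0t : Fin N → Fin T → Fin F → ℝ)
    (hH0t : H0t = tmul3 (tmul2 (tmul1 H0 Q1ᵀ) Q2ᵀ) Q3ᵀ)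
    (t : ℝ) :
    (fun i j k => ∫ τ in (0:ℝ)..t,
        tmul3 (tmul2 (tmul1 H0 (NormedSpace.exp ((t - τ) • B1ᵀ)))
          (NormedSpace.exp ((t - τ) • B2ᵀ)))
          (NormedSpace.exp ((t - τ) • B3ᵀ)) i j k) =
      tmul3 (tmul2 (tmul1
        (fun i j k => H0t i j k * (Real.exp ((lam i + mu j + nu k) * t) - 1) /
          (lam i + mu j + nu k)) P1ᵀ) P2ᵀ) P3ᵀ :=
  integral_term_closed_form_general H0 B1 P1 Q1 lam B2 P2 Q2 mu B3 P3 Q3 nu hP1 hP2 hP3 hB1 hB2 hB3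
    hne H0t hH0t t
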